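/- Assume char F ≠ 2 and let c ∈ O be an element not of the form γ·1 with γ ∈ F. Let X be the set of solutions of x² = c in O. (a) If n(c) = s² for some s ∈ F, set α = tr(c) + 2s and β = tr(c) − 2s; then: if both α and β are squares of nonzero elements of F, say α = p², β = q² with p, q ≠ 0, then X = { ±(1/p)(c + s·1), ±(1/q)(c − s·1) }; if α = p² with p ≠ 0 but β is not the square of a nonzero element, then X = { ±(1/p)(c + s·1) }; if β = q² with q ≠ 0 but α is not the square of a nonzero element, then X = { ±(1/q)(c − s·1) }; and if neither α nor β is the square of a nonzero element, then X = ∅. (b) If n(c) is not a square in F, then X = ∅. -/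
import Mathlib


@[ext]
structure Zorn (F : Type*) where
  x1 : F
  u : Fin 3 → F
  v : Fin 3 → F
  x2 : F

namespace Zorn

variable {F : Type*} [Field F]

/-- Dot product on `F³`. -/
def dot (x y : Fin 3 → F) : F := x 0 * y 0 + x 1 * y 1 + x 2 * y 2

/-- Cross product on `F³`. -/
def cross (x y : Fin 3 → F) : Fin 3 → F :=
  ![x 1 * y 2 - x 2 * y 1, x 2 * y 0 - x 0 * y 2, x 0 * y 1 - x 1 * y 0]

instance : Add (Zorn F) :=
  ⟨fun a b => ⟨a.x1 + b.x1, a.u + b.u, a.v + b.v, a.x2 + b.x2⟩⟩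

instance : Zero (Zorn F) := ⟨⟨0, 0, 0, 0⟩⟩

instance : Neg (Zorn F) := ⟨fun a => ⟨-a.x1, -a.u, -a.v, -a.x2⟩⟩

instance : Sub (Zorn F) :=
  ⟨fun a b => ⟨a.x1 - b.x1, a.u - b.u, a.v - b.v, a.x2 - b.x2⟩⟩

instance : SMul F (Zorn F) :=
  ⟨fun c a => ⟨c * a.x1, c • a.u, c • a.v, c * a.x2⟩⟩

/-- Zorn vector-matrix multiplication. -/
instance : Mul (Zorn F) :=
  ⟨fun a b =>
    ⟨a.x1 * b.x1 + dot a.u b.v,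
     a.x1 • b.u + b.x2 • a.u - cross a.v b.v,
     b.x1 • a.v + a.x2 • b.v + cross a.u b.u,
     a.x2 * b.x2 + dot a.v b.u⟩⟩

instance : One (Zorn F) := ⟨⟨1, 0, 0, 1⟩⟩

@[simp] lemma add_def (a b : Zorn F) :
    a + b = ⟨a.x1 + b.x1, a.u + b.u, a.v + b.v, a.x2 + b.x2⟩ := rfl
@[simp] lemma zero_def : (0 : Zorn F) = ⟨0, 0, 0, 0⟩ := rfl
@[simp] lemma neg_def (a : Zorn F) : -a = ⟨-a.x1, -a.u, -a.v, -a.x2⟩ := rfl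
@[simp] lemma sub_def (a b : Zorn F) :
    a - b = ⟨a.x1 - b.x1, a.u - b.u, a.v - b.v, a.x2 - b.x2⟩ := rfl
@[simp] lemma smul_def (c : F) (a : Zorn F) :
    c • a = ⟨c * a.x1, c • a.u, c • a.v, c * a.x2⟩ := rfl

instance : AddCommGroup (Zorn F) where
  add_assoc a b c := by ext <;> simp [add_assoc]
  zero_add a := by ext <;> simp
  add_zero a := by ext <;> simp
  add_comm a b := by ext <;> simp [add_comm]
  neg_add_cancel a := by ext <;> simp
  sub_eq_add_neg a b := by ext <;> simp [sub_eq_add_neg]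
  nsmul := nsmulRec
  zsmul := zsmulRec

instance : Module F (Zorn F) where
  one_smul a := by ext <;> simp
  mul_smul c d a := by ext <;> simp [mul_assoc, mul_smul]
  smul_zero c := by ext <;> simp
  smul_add c a b := by ext <;> simp [mul_add]
  add_smul c d a := by ext <;> simp [add_mul, add_smul]
  zero_smul a := by ext <;> simp

/-- The trace of a split octonion. -/
def trace (a : Zorn F) : F := a.x1 + a.x2

/-- The norm of a split octonion. -/
def norm (a : Zorn F) : F := a.x1 * a.x2 - dot a.u a.v

/-- The conjugate of a split octonion. -/
def conj (a : Zorn F) : Zorn F := ⟨a.x2, -a.u, -a.v, a.x1⟩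

end Zorn

namespace Zorn

variable {F : Type*} [Field F]

@[simp] lemma one_def : (1 : Zorn F) = ⟨1, 0, 0, 1⟩ := rfl

lemma mul_def (a b : Zorn F) : a * b =
    ⟨a.x1 * b.x1 + dot a.u b.v,
     a.x1 • b.u + b.x2 • a.u - cross a.v b.v,
     b.x1 • a.v + a.x2 • b.v + cross a.u b.u,
     a.x2 * b.x2 + dot a.v b.u⟩ := rfl

lemma sq_eq (x : Zorn F) : x * x = trace x • x - norm x • 1 := by
  ext i <;>
    first
      | (fin_cases i <;>
          simp [mul_def, trace, norm, dot, cross, Matrix.vecHead, Matrix.vecTail,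
            Pi.smul_apply, smul_eq_mul] <;> ring)
      | (simp [mul_def, trace, norm, dot, cross]; ring)

lemma trace_smul' (t : F) (x : Zorn F) : trace (t • x) = t * trace x := by
  simp [trace]; ring

lemma trace_add' (a b : Zorn F) : trace (a + b) = trace a + trace b := by
  simp [trace]; ring

lemma trace_one' : trace (1 : Zorn F) = 2 := by
  simp [trace]; norm_num

lemma norm_smul' (t : F) (x : Zorn F) : norm (t • x) = t ^ 2 * norm x := by
  simp [norm, dot]; ring

lemma norm_add_smul_one (c : Zorn F) (n : F) :
    norm (c + n • (1 : Zorn F)) = norm c + n * trace c + n ^ 2 := by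
  simp [norm, trace, dot]; ring

lemma sol_iff (c : Zorn F) (hc : ∀ γ : F, c ≠ γ • (1 : Zorn F)) (x : Zorn F) :
    x * x = c ↔ ∃ n t : F, t ≠ 0 ∧ n ^ 2 = norm c ∧ t ^ 2 = trace c + 2 * n ∧
      x = t⁻¹ • (c + n • (1 : Zorn F)) := by
  constructor
  · intro h
    set t := trace x with htdef
    set n := norm x with hndef
    have key : t • x = c + n • (1 : Zorn F) := by
      rw [← h, sq_eq x, ← htdef, ← hndef]; abel
    have ht : t ≠ 0 := by
      intro h0
      apply hc (-n)
      rw [h0, zero_smul] at key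
      rw [neg_smul, eq_neg_iff_add_eq_zero, ← key]
    have htr : t ^ 2 = trace c + 2 * n := by
      have := congrArg trace key
      rw [trace_smul', trace_add', trace_smul', trace_one', ← htdef] at this
      linear_combination this
    have hnn : n ^ 2 = norm c := by
      have := congrArg norm key
      rw [norm_smul', norm_add_smul_one, ← hndef] at this
      linear_combination this - n * htr
    exact ⟨n, t, ht, hnn, htr, by rw [← key, smul_smul, inv_mul_cancel₀ ht, one_smul]⟩
  · rintro ⟨n, t, ht, hn, htr, rfl⟩
    have h1 : trace (t⁻¹ • (c + n • (1 : Zorn F))) = t := by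
      have e1 : trace c + n * 2 = t * t := by linear_combination -htr
      rw [trace_smul', trace_add', trace_smul', trace_one', e1,
        inv_mul_cancel_left₀ ht]
    have h2 : norm (t⁻¹ • (c + n • (1 : Zorn F))) = n := by
      have e2 : norm c + n * trace c + n ^ 2 = n * t ^ 2 := by
        linear_combination (-1 : F) * hn - n * htr
      rw [norm_smul', norm_add_smul_one, e2]
      field_simp
    rw [sq_eq, h1, h2, smul_smul, mul_inv_cancel₀ ht, one_smul]
    abel

end Zorn

namespace Zorn

lemma two_roots {F : Type*} [Field F] {A p t : F} (hp2 : p ^ 2 = A)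
    (ht2 : t ^ 2 = A) : t = p ∨ t = -p := by
  have h : (t - p) * (t + p) = 0 := by linear_combination ht2 - hp2
  rcases mul_eq_zero.1 h with h | h
  · exact Or.inl (sub_eq_zero.1 h)
  · exact Or.inr (eq_neg_of_add_eq_zero_left h)

lemma add_neg_smul_one {F : Type*} [Field F] (c : Zorn F) (s : F) :
    c + (-s) • (1 : Zorn F) = c - s • (1 : Zorn F) := by
  rw [neg_smul, sub_eq_add_neg]

end Zorn


/-- assume `char F ≠ 2` and let `c` be non-scalar; description of the solution
set `X` of `x² = c`.  (a) If `n(c) = s²`, put `α = tr(c) + 2s`, `β = tr(c) − 2s`; then `X` is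
as listed depending on which of `α, β` are squares of nonzero elements; (b) if `n(c)` is not a
square then `X = ∅`. -/
theorem zorn_square_roots {F : Type*} [Field F] (hF : ringChar F ≠ 2)
    (c : Zorn F) (hc : ∀ γ : F, c ≠ γ • (1 : Zorn F)) :
    (∀ s : F, s ^ 2 = Zorn.norm c →
      (∀ p q : F, p ≠ 0 → p ^ 2 = Zorn.trace c + 2 * s → q ≠ 0 →
          q ^ 2 = Zorn.trace c - 2 * s →
        {x : Zorn F | x * x = c} =
          {p⁻¹ • (c + s • (1 : Zorn F)), -(p⁻¹ • (c + s • (1 : Zorn F))),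
           q⁻¹ • (c - s • (1 : Zorn F)), -(q⁻¹ • (c - s • (1 : Zorn F)))}) ∧
      (∀ p : F, p ≠ 0 → p ^ 2 = Zorn.trace c + 2 * s →
          (¬ ∃ q : F, q ≠ 0 ∧ q ^ 2 = Zorn.trace c - 2 * s) →
        {x : Zorn F | x * x = c} =
          {p⁻¹ • (c + s • (1 : Zorn F)), -(p⁻¹ • (c + s • (1 : Zorn F)))}) ∧
      (∀ q : F, q ≠ 0 → q ^ 2 = Zorn.trace c - 2 * s →
          (¬ ∃ p : F, p ≠ 0 ∧ p ^ 2 = Zorn.trace c + 2 * s) →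
        {x : Zorn F | x * x = c} =
          {q⁻¹ • (c - s • (1 : Zorn F)), -(q⁻¹ • (c - s • (1 : Zorn F)))}) ∧
      ((¬ ∃ p : F, p ≠ 0 ∧ p ^ 2 = Zorn.trace c + 2 * s) →
       (¬ ∃ q : F, q ≠ 0 ∧ q ^ 2 = Zorn.trace c - 2 * s) →
        {x : Zorn F | x * x = c} = ∅)) ∧
    ((¬ ∃ s : F, s ^ 2 = Zorn.norm c) → {x : Zorn F | x * x = c} = ∅) := by
  
  have sol := Zorn.sol_iff c hc
  refine ⟨fun s hs => ?_, fun hns => ?_⟩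
  · have fwd : ∀ {n t : F}, n ^ 2 = Zorn.norm c → t ^ 2 = Zorn.trace c + 2 * n →
        (n = s ∧ t ^ 2 = Zorn.trace c + 2 * s) ∨
        (n = -s ∧ t ^ 2 = Zorn.trace c - 2 * s) := by
      intro n t hn htr
      rcases Zorn.two_roots hs hn with rfl | rfl
      · exact Or.inl ⟨rfl, htr⟩
      · exact Or.inr ⟨rfl, by linear_combination htr⟩
    have bwd_p : ∀ p : F, p ≠ 0 → p ^ 2 = Zorn.trace c + 2 * s →
        (p⁻¹ • (c + s • (1 : Zorn F))) * (p⁻¹ • (c + s • (1 : Zorn F))) = c ∧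
        (-(p⁻¹ • (c + s • (1 : Zorn F)))) * (-(p⁻¹ • (c + s • (1 : Zorn F)))) = c := by
      intro p hp hp2
      constructor
      · exact (sol _).2 ⟨s, p, hp, hs, hp2, rfl⟩
      · refine (sol _).2 ⟨s, -p, neg_ne_zero.2 hp, hs, by rw [neg_pow]; simpa using hp2, ?_⟩
        rw [inv_neg, neg_smul]
    have bwd_q : ∀ q : F, q ≠ 0 → q ^ 2 = Zorn.trace c - 2 * s →
        (q⁻¹ • (c - s • (1 : Zorn F))) * (q⁻¹ • (c - s • (1 : Zorn F))) = c ∧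
        (-(q⁻¹ • (c - s • (1 : Zorn F)))) * (-(q⁻¹ • (c - s • (1 : Zorn F)))) = c := by
      intro q hq hq2
      have hns2 : (-s) ^ 2 = Zorn.norm c := by rw [neg_pow]; simpa using hs
      have hq2' : q ^ 2 = Zorn.trace c + 2 * (-s) := by linear_combination hq2
      constructor
      · refine (sol _).2 ⟨-s, q, hq, hns2, hq2', ?_⟩
        rw [Zorn.add_neg_smul_one]
      · refine (sol _).2 ⟨-s, -q, neg_ne_zero.2 hq, hns2,
          by rw [neg_pow]; simpa using hq2', ?_⟩
        rw [Zorn.add_neg_smul_one, inv_neg, neg_smul]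
    refine ⟨?_, ?_, ?_, ?_⟩
    · intro p q hp hp2 hq hq2
      ext x
      simp only [Set.mem_setOf_eq, Set.mem_insert_iff, Set.mem_singleton_iff]
      constructor
      · intro hx
        rcases (sol x).1 hx with ⟨n, t, ht, hn, htr, rfl⟩
        rcases fwd hn htr with ⟨rfl, ht2⟩ | ⟨rfl, ht2⟩
        · rcases Zorn.two_roots hp2 ht2 with rfl | rfl
          · exact Or.inl rfl
          · exact Or.inr (Or.inl (by rw [inv_neg, neg_smul]))
        · rcases Zorn.two_roots hq2 ht2 with rfl | rfl
          · exact Or.inr (Or.inr (Or.inl (by rw [Zorn.add_neg_smul_one])))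
          · exact Or.inr (Or.inr (Or.inr
              (by rw [Zorn.add_neg_smul_one, inv_neg, neg_smul])))
      · rintro (rfl | rfl | rfl | rfl)
        · exact (bwd_p p hp hp2).1
        · exact (bwd_p p hp hp2).2
        · exact (bwd_q q hq hq2).1
        · exact (bwd_q q hq hq2).2
    · intro p hp hp2 hnq
      ext x
      simp only [Set.mem_setOf_eq, Set.mem_insert_iff, Set.mem_singleton_iff]
      constructor
      · intro hx
        rcases (sol x).1 hx with ⟨n, t, ht, hn, htr, rfl⟩
        rcases fwd hn htr with ⟨rfl, ht2⟩ | ⟨rfl, ht2⟩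
        · rcases Zorn.two_roots hp2 ht2 with rfl | rfl
          · exact Or.inl rfl
          · exact Or.inr (by rw [inv_neg, neg_smul])
        · exact absurd ⟨t, ht, ht2⟩ hnq
      · rintro (rfl | rfl)
        · exact (bwd_p p hp hp2).1
        · exact (bwd_p p hp hp2).2
    · intro q hq hq2 hnp
      ext x
      simp only [Set.mem_setOf_eq, Set.mem_insert_iff, Set.mem_singleton_iff]
      constructor
      · intro hx
        rcases (sol x).1 hx with ⟨n, t, ht, hn, htr, rfl⟩
        rcases fwd hn htr with ⟨rfl, ht2⟩ | ⟨rfl, ht2⟩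
        · exact absurd ⟨t, ht, ht2⟩ hnp
        · rcases Zorn.two_roots hq2 ht2 with rfl | rfl
          · exact Or.inl (by rw [Zorn.add_neg_smul_one])
          · exact Or.inr (by rw [Zorn.add_neg_smul_one, inv_neg, neg_smul])
      · rintro (rfl | rfl)
        · exact (bwd_q q hq hq2).1
        · exact (bwd_q q hq hq2).2
    · intro hnp hnq
      rw [Set.eq_empty_iff_forall_notMem]
      intro x hx
      rcases (sol x).1 hx with ⟨n, t, ht, hn, htr, rfl⟩
      rcases fwd hn htr with ⟨rfl, ht2⟩ | ⟨rfl, ht2⟩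
      · exact hnp ⟨t, ht, ht2⟩
      · exact hnq ⟨t, ht, ht2⟩
  · rw [Set.eq_empty_iff_forall_notMem]
    intro x hx
    rcases (sol x).1 hx with ⟨n, t, ht, hn, htr, rfl⟩
    exact hns ⟨n, hn⟩
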